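/- arXiv:2603.20277 — 3 statements merged into one kernel-verified Lean document; each statement's English description precedes it below -/
import Mathlib

section
/- The excess demand function f(λ) = Σᵢ xᵢ*(λ) − y*(λ) is continuous and strictly decreasing on (0,∞), and f(λ) → −∞ as λ → ∞. -/
/-!
Each capped demand `max 0 (min (g λ) (b / λ))` is continuous and antitone in `λ`, so subtracting
the strictly increasing `y*` gives a strictly decreasing excess demand. For `λ ≥ 1` the demand is
bounded by its value at `1`, while `y* → ∞`.
-/

open Set Filter

noncomputable section

def budgetDemand (g : ℝ → ℝ) (b l : ℝ) : ℝ := max 0 (min (g l) (b / l))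

theorem budgetDemand_antitoneOn {g : ℝ → ℝ} {b : ℝ} (hg : AntitoneOn g (Ioi 0))
    (hb : 0 ≤ b) :
    AntitoneOn (budgetDemand g b) (Ioi 0) := fun _ hx _ hy hxy =>
  max_le_max le_rfl (min_le_min (hg hx hy hxy) (div_le_div_of_nonneg_left hb hx hxy))

theorem budgetDemand_continuousOn {g : ℝ → ℝ} (b : ℝ) (hg : ContinuousOn g (Ioi 0)) :
    ContinuousOn (budgetDemand g b) (Ioi 0) :=
  continuousOn_const.sup (hg.inf (continuousOn_const.div continuousOn_id fun _ hl => hl.ne'))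

end

theorem AntitoneOn.sub_strictMonoOn {α β : Type*} [Preorder α] [AddCommGroup β]
    [PartialOrder β] [IsOrderedAddMonoid β] {f g : α → β} {s : Set α} (hf : AntitoneOn f s)
    (hg : StrictMonoOn g s) : StrictAntiOn (fun x => f x - g x) s := fun _ ha _ hb hab => by
  simpa only [sub_eq_add_neg] using
    add_lt_add_of_le_of_lt (hf ha hb hab.le) (neg_lt_neg (hg ha hb hab))

theorem Filter.tendsto_atBot_sub_of_le' {α β : Type*} [AddCommGroup β] [PartialOrder β]
    [IsOrderedAddMonoid β] {l : Filter α} {f g : α → β} (C : β)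
    (hf : ∀ᶠ x in l, f x ≤ C) (hg : Tendsto g l atTop) :
    Tendsto (fun x => f x - g x) l atBot := by
  simpa only [sub_eq_add_neg, Function.comp_def] using
    tendsto_atBot_add_left_of_ge' l C hf (tendsto_neg_atTop_atBot.comp hg)

/-- The excess demand function f(λ) = Σᵢ xᵢ*(λ) − y*(λ) is continuous and
strictly decreasing on (0,∞), and f(λ) → −∞ as λ → ∞. Here g i is the
continuous strictly decreasing inverse (uᵢ')⁻¹ and ystar = (C')⁻¹ is
continuous, strictly increasing and tends to ∞. -/
theorem stmt_4 (n : ℕ) (g : Fin n → ℝ → ℝ) (b : Fin n → ℝ)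
    (hb : ∀ i, 0 < b i)
    (hgc : ∀ i, ContinuousOn (g i) (Set.Ioi 0))
    (hga : ∀ i, StrictAntiOn (g i) (Set.Ioi 0))
    (ystar : ℝ → ℝ)
    (hyc : ContinuousOn ystar (Set.Ioi 0))
    (hym : StrictMonoOn ystar (Set.Ioi 0))
    (hyt : Filter.Tendsto ystar Filter.atTop Filter.atTop) :
    ContinuousOn
        (fun l => (∑ i, max 0 (min (g i l) (b i / l))) - ystar l) (Set.Ioi 0) ∧
      StrictAntiOn
        (fun l => (∑ i, max 0 (min (g i l) (b i / l))) - ystar l) (Set.Ioi 0) ∧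
      Filter.Tendsto
        (fun l => (∑ i, max 0 (min (g i l) (b i / l))) - ystar l)
        Filter.atTop Filter.atBot := by
  let demand := fun l => ∑ i, budgetDemand (g i) (b i) l
  have hanti : AntitoneOn demand (Ioi 0) := fun _ hx _ hy hxy =>
    Finset.sum_le_sum fun i _ => budgetDemand_antitoneOn (hga i).antitoneOn (hb i).le hx hy hxy
  have hcont : ContinuousOn demand (Ioi 0) :=
    continuousOn_finsetSum _ fun i _ => budgetDemand_continuousOn (b i) (hgc i)
  refine ⟨hcont.sub hyc, hanti.sub_strictMonoOn hym,
    tendsto_atBot_sub_of_le' (demand 1) ?_ hyt⟩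
  filter_upwards [eventually_ge_atTop 1] with l hl
  exact hanti (mem_Ioi.2 one_pos) (mem_Ioi.2 (one_pos.trans_le hl)) hl
end

section
/- For quadratic utility u(x) = βx − (α/2)x² with β² ≥ 4αb, the piecewise function û equal to u(x) on [0, x̃_lo], to b·log(x) + u(x̃_lo) − b·log(x̃_lo) on [x̃_lo, x̃_hi], and to u(x) + constant (chosen for continuity) on [x̃_hi, ∞) is continuously differentiable with û'(x) = min{u'(x), b/x} for all x > 0. -/
/-! For `x > 0`, `u' x ≤ b / x` exactly when `α x² - β x + b = α (x - x̃_lo) (x - x̃_hi) ≥ 0`,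
so `b / x` is the smaller slope between the roots `x̃_lo ≤ x̃_hi` and `u'` is the smaller one
outside. Each of the three pieces thus has derivative `min (u' x) (b / x)` on its closed interval,
the constants make the pieces agree at the break points, and equal one-sided derivatives glue to a
two-sided one. -/

open Set Filter Topology

theorem hasDerivAt_ite_le {f g : ℝ → ℝ} {c x f' : ℝ} (hfg : f c = g c)
    (hf : x ≤ c → HasDerivAt f f' x) (hg : c ≤ x → HasDerivAt g f' x) :
    HasDerivAt (fun y => if y ≤ c then f y else g y) f' x := by
  rcases lt_trichotomy x c with hxc | rfl | hcx
  · refine (hf hxc.le).congr_of_eventuallyEq ?_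
    filter_upwards [eventually_lt_nhds hxc] with y hy
    simp [hy.le]
  · have hleft : HasDerivWithinAt (fun y => if y ≤ x then f y else g y) f' (Iic x) x :=
      (hf le_rfl).hasDerivWithinAt.congr (fun y hy => if_pos hy) (if_pos le_rfl)
    have hright : HasDerivWithinAt (fun y => if y ≤ x then f y else g y) f' (Ici x) x := by
      refine (hg le_rfl).hasDerivWithinAt.congr (fun y (hy : x ≤ y) => ?_) (by simp [hfg])
      rcases hy.eq_or_lt with rfl | hxy
      · simp [hfg]
      · simp [not_le.2 hxy]
    simpa [Iic_union_Ici, hasDerivWithinAt_univ] using hleft.union hright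
  · refine (hg hcx.le).congr_of_eventuallyEq ?_
    filter_upwards [eventually_gt_nhds hcx] with y hy
    simp [not_le.2 hy]

theorem quadratic_eq_mul_sub_mul_sub {α β b : ℝ} (hα : α ≠ 0) (hdisc : 4 * α * b ≤ β ^ 2)
    (y : ℝ) :
    α * y ^ 2 - β * y + b =
      α * (y - (β - √(β ^ 2 - 4 * α * b)) / (2 * α)) *
        (y - (β + √(β ^ 2 - 4 * α * b)) / (2 * α)) := by
  have hs := Real.sq_sqrt (sub_nonneg.2 hdisc)
  generalize √(β ^ 2 - 4 * α * b) = s at hs ⊢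
  field_simp
  linear_combination hs

section TwoSlopes

variable {α β b r₁ r₂ x : ℝ}

theorem min_sub_mul_div_eq_left (hα : 0 < α) (hx : 0 < x)
    (hfac : α * x ^ 2 - β * x + b = α * (x - r₁) * (x - r₂)) (h : 0 ≤ (x - r₁) * (x - r₂)) :
    min (β - α * x) (b / x) = β - α * x := by
  refine min_eq_left ((le_div_iff₀ hx).2 ?_)
  nlinarith [mul_nonneg hα.le h]

theorem min_sub_mul_div_eq_right (hα : 0 < α) (hx : 0 < x)
    (hfac : α * x ^ 2 - β * x + b = α * (x - r₁) * (x - r₂)) (h : (x - r₁) * (x - r₂) ≤ 0) :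
    min (β - α * x) (b / x) = b / x := by
  refine min_eq_right ((div_le_iff₀ hx).2 ?_)
  nlinarith [mul_nonpos_of_nonneg_of_nonpos hα.le h]

end TwoSlopes

theorem hasDerivAt_quadratic_utility (α β x : ℝ) :
    HasDerivAt (fun z => β * z - α / 2 * z ^ 2) (β - α * x) x := by
  refine (((hasDerivAt_id' x).const_mul β).sub
    ((hasDerivAt_pow 2 x).const_mul (α / 2))).congr_deriv ?_
  push_cast
  ring

theorem stmt_15_general (α β b : ℝ) (hα : 0 < α)
    (hdisc : β ^ 2 ≥ 4 * α * b) :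
    ∀ x : ℝ, 0 < x →
      HasDerivAt
        (fun y : ℝ =>
          let u := fun z : ℝ => β * z - α / 2 * z ^ 2
          let xlo := (β - Real.sqrt (β ^ 2 - 4 * α * b)) / (2 * α)
          let xhi := (β + Real.sqrt (β ^ 2 - 4 * α * b)) / (2 * α)
          if y ≤ xlo then u y
          else if y ≤ xhi then b * Real.log y + u xlo - b * Real.log xlo
          else u y + (b * Real.log xhi + u xlo - b * Real.log xlo - u xhi))
        (min (β - α * x) (b / x)) x := by
  intro x hx
  have hfac := quadratic_eq_mul_sub_mul_sub hα.ne' hdisc x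
  set xlo := (β - √(β ^ 2 - 4 * α * b)) / (2 * α)
  set xhi := (β + √(β ^ 2 - 4 * α * b)) / (2 * α)
  have hle : xlo ≤ xhi :=
    div_le_div_of_nonneg_right (by linarith [Real.sqrt_nonneg (β ^ 2 - 4 * α * b)])
      (by positivity)
  refine hasDerivAt_ite_le (by simp [hle]) (fun hxlo => ?_) fun hxlo =>
    hasDerivAt_ite_le (by ring) (fun hxhi => ?_) fun hxhi => ?_
  · rw [min_sub_mul_div_eq_left hα hx hfac
      (mul_nonneg_of_nonpos_of_nonpos (by linarith) (by linarith))]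
    exact hasDerivAt_quadratic_utility α β x
  · rw [min_sub_mul_div_eq_right hα hx hfac
      (mul_nonpos_of_nonneg_of_nonpos (by linarith) (by linarith))]
    refine ((((Real.hasDerivAt_log hx.ne').const_mul b).add_const _).sub_const _).congr_deriv ?_
    ring
  · rw [min_sub_mul_div_eq_left hα hx hfac (mul_nonneg (by linarith) (by linarith))]
    exact (hasDerivAt_quadratic_utility α β x).add_const _

/-- For quadratic utility u(x) = βx − (α/2)x² with β² ≥ 4αb, the piecewise
function û (equal to u below x̃_lo, to b·log x + const on [x̃_lo, x̃_hi], and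
to u + const above x̃_hi, with constants chosen for continuity) is
differentiable with û'(x) = min{u'(x), b/x} for all x > 0. -/
theorem stmt_15 (α β b : ℝ) (hα : 0 < α) (hβ : 0 < β) (hb : 0 < b)
    (hdisc : β ^ 2 ≥ 4 * α * b) :
    ∀ x : ℝ, 0 < x →
      HasDerivAt
        (fun y : ℝ =>
          let u := fun z : ℝ => β * z - α / 2 * z ^ 2
          let xlo := (β - Real.sqrt (β ^ 2 - 4 * α * b)) / (2 * α)
          let xhi := (β + Real.sqrt (β ^ 2 - 4 * α * b)) / (2 * α)
          if y ≤ xlo then u y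
          else if y ≤ xhi then b * Real.log y + u xlo - b * Real.log xlo
          else u y + (b * Real.log xhi + u xlo - b * Real.log xlo - u xhi))
        (min (β - α * x) (b / x)) x :=
  stmt_15_general α β b hα hdisc
end

section
/- Suppose the market-clearing price λ* satisfies Σᵢ xᵢ*(λ*) = y*(λ*), where xᵢ*(λ) = min{(uᵢ')⁻¹(λ), bᵢ/λ} > 0 and y*(λ) = (C')⁻¹(λ). Then the allocation (x*(λ*), y*(λ*)) together with λ* solves the modified welfare maximization problem: it maximizes Σᵢ ûᵢ(xᵢ) − C(y) subject to Σᵢ xᵢ = y, xᵢ ≥ 0, where ûᵢ is any continuously differentiable function with ûᵢ'(x) = min{uᵢ'(x), bᵢ/x}. -/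
/-!
Each modified utility `ûᵢ` has the antitone derivative `min (uᵢ' x) (bᵢ / x)`, so it is concave,
and at `xᵢ* = min ((uᵢ')⁻¹ λ*) (bᵢ / λ*)` that derivative equals `λ*`. The tangent lines at
the candidate point give `ûᵢ(xᵢ) ≤ ûᵢ(xᵢ*) + λ* (xᵢ - xᵢ*)` and, by convexity of `C` with
`C'(y*) = λ*`, `C(y*) + λ* (y - y*) ≤ C(y)`. Summing, the `λ*`-terms cancel because both allocations
clear the market.
-/

open Set

theorem ConvexOn.add_mul_sub_le_of_hasDerivAt {S : Set ℝ} {f : ℝ → ℝ} {x y f' : ℝ}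
    (hf : ConvexOn ℝ S f) (hx : x ∈ S) (hy : y ∈ S) (hd : HasDerivAt f f' x) :
    f x + f' * (y - x) ≤ f y := by
  rcases lt_trichotomy y x with hyx | rfl | hxy
  · have h := hf.slope_le_of_hasDerivAt hy hx hyx hd
    rw [slope_def_field, div_le_iff₀ (sub_pos.2 hyx)] at h
    linarith
  · simp
  · have h := hf.le_slope_of_hasDerivAt hx hy hxy hd
    rw [slope_def_field, le_div_iff₀ (sub_pos.2 hxy)] at h
    linarith

theorem ConcaveOn.le_add_mul_sub_of_hasDerivAt {S : Set ℝ} {f : ℝ → ℝ} {x y f' : ℝ}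
    (hf : ConcaveOn ℝ S f) (hx : x ∈ S) (hy : y ∈ S) (hd : HasDerivAt f f' x) :
    f y ≤ f x + f' * (y - x) := by
  have h := hf.neg.add_mul_sub_le_of_hasDerivAt hx hy hd.neg
  simp only [Pi.neg_apply] at h
  linarith

theorem concaveOn_of_hasDerivAt_of_antitoneOn {D : Set ℝ} (hD : Convex ℝ D) {f g : ℝ → ℝ}
    (hf : ContinuousOn f D) (hd : ∀ x ∈ interior D, HasDerivAt f (g x) x)
    (hg : AntitoneOn g (interior D)) : ConcaveOn ℝ D f := by
  refine AntitoneOn.concaveOn_of_deriv hD hf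
    (fun x hx => (hd x hx).differentiableAt.differentiableWithinAt) ?_
  intro a ha c hc hac
  rw [(hd a ha).deriv, (hd c hc).deriv]
  exact hg ha hc hac

theorem antitoneOn_min_div {u' : ℝ → ℝ} {b : ℝ} (hu : AntitoneOn u' (Ioi 0)) (hb : 0 ≤ b) :
    AntitoneOn (fun x => min (u' x) (b / x)) (Ioi 0) :=
  fun _ ha _ hc hac => min_le_min (hu ha hc hac) (div_le_div_of_nonneg_left hb ha hac)

theorem min_apply_min_div_eq {u' : ℝ → ℝ} {b L xinv : ℝ} (hu : AntitoneOn u' (Ioi 0))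
    (hb : 0 < b) (hL : 0 < L) (hx : 0 < xinv) (hval : u' xinv = L) :
    min (u' (min xinv (b / L))) (b / min xinv (b / L)) = L := by
  set m := min xinv (b / L)
  have hm : 0 < m := lt_min hx (div_pos hb hL)
  have hu_ge : L ≤ u' m := hval ▸ hu hm hx (min_le_left _ _)
  have hb_ge : L ≤ b / m := by
    rw [le_div_iff₀ hm, mul_comm, ← le_div_iff₀ hL]
    exact min_le_right _ _
  refine le_antisymm ?_ (le_min hu_ge hb_ge)
  rcases min_choice xinv (b / L) with h | h <;> change m = _ at h
  · exact (min_le_left _ _).trans (by rw [h, hval])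
  · exact (min_le_right _ _).trans (by rw [h, div_div_cancel₀ hb.ne'])

/-- If the market-clearing price λ* satisfies Σᵢ xᵢ*(λ*) = y*(λ*) with
xᵢ*(λ*) = min{(uᵢ')⁻¹(λ*), bᵢ/λ*} > 0 and C'(y*(λ*)) = λ*, then the
allocation (x*(λ*), y*(λ*)) maximizes the modified welfare
Σᵢ ûᵢ(xᵢ) − C(y) subject to Σᵢ xᵢ = y, xᵢ ≥ 0, where ûᵢ is any
continuously differentiable function with ûᵢ'(x) = min{uᵢ'(x), bᵢ/x}. -/
theorem stmt_19 (n : ℕ) (u' uh : Fin n → ℝ → ℝ) (b : Fin n → ℝ)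
    (C C' : ℝ → ℝ) (lstar : ℝ) (xinv : Fin n → ℝ) (ystar : ℝ)
    (hb : ∀ i, 0 < b i) (hl : 0 < lstar)
    (hu'anti : ∀ i, StrictAntiOn (u' i) (Set.Ioi 0))
    (huhcont : ∀ i, ContinuousOn (uh i) (Set.Ici 0))
    (huhderiv : ∀ i, ∀ x ∈ Set.Ioi (0 : ℝ),
      HasDerivAt (uh i) (min (u' i x) (b i / x)) x)
    (hCconv : StrictConvexOn ℝ (Set.Ici 0) C)
    (hCderiv : ∀ y ∈ Set.Ici (0 : ℝ), HasDerivAt C (C' y) y)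
    (hxinv : ∀ i, 0 < xinv i) (hval : ∀ i, u' i (xinv i) = lstar)
    (hystar : 0 ≤ ystar) (hCval : C' ystar = lstar)
    (hclear : (∑ i, min (xinv i) (b i / lstar)) = ystar) :
    ∀ x : Fin n → ℝ, ∀ y : ℝ, (∀ i, 0 ≤ x i) → (∑ i, x i) = y →
      (∑ i, uh i (x i)) - C y ≤
        (∑ i, uh i (min (xinv i) (b i / lstar))) - C ystar := by
  intro x y hx hxy
  set xs : Fin n → ℝ := fun i => min (xinv i) (b i / lstar)
  have hconsumer (i : Fin n) : uh i (x i) ≤ uh i (xs i) + lstar * (x i - xs i) := by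
    have hpos : 0 < xs i := lt_min (hxinv i) (div_pos (hb i) hl)
    have hconc : ConcaveOn ℝ (Ici 0) (uh i) :=
      concaveOn_of_hasDerivAt_of_antitoneOn (convex_Ici 0) (huhcont i)
        (by simpa only [interior_Ici] using huhderiv i)
        (by simpa only [interior_Ici] using antitoneOn_min_div (hu'anti i).antitoneOn (hb i).le)
    have hd := huhderiv i (xs i) hpos
    rw [min_apply_min_div_eq (hu'anti i).antitoneOn (hb i) hl (hxinv i) (hval i)] at hd
    exact hconc.le_add_mul_sub_of_hasDerivAt hpos.le (hx i) hd
  have hproducer : C ystar + lstar * (y - ystar) ≤ C y :=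
    hCval ▸ hCconv.convexOn.add_mul_sub_le_of_hasDerivAt hystar
      (hxy ▸ Finset.sum_nonneg fun i _ => hx i) (hCderiv ystar hystar)
  have hwelfare : ∑ i, uh i (x i) ≤ ∑ i, uh i (xs i) + lstar * (y - ystar) :=
    calc ∑ i, uh i (x i) ≤ ∑ i, (uh i (xs i) + lstar * (x i - xs i)) :=
          Finset.sum_le_sum fun i _ => hconsumer i
      _ = ∑ i, uh i (xs i) + lstar * (y - ystar) := by
          rw [Finset.sum_add_distrib, ← Finset.mul_sum, Finset.sum_sub_distrib, hxy, hclear]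
  linarith
end
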